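/- In the Grigorchuk group, the map σ defined on generators by σ(a) = aca, σ(b) = d, σ(c) = b, σ(d) = c extends to a group homomorphism σ: G → G whose image lies in the first-level stabilizer H, and it satisfies ψ(σ(g)) = (τ(g), g) for all g ∈ G, where τ: G → G is the homomorphism with τ(a) = d, τ(b) = 1, τ(c) = a, τ(d) = a. -/

import Mathlib

/-- The generator `a` of the Grigorchuk group, acting on finite binary sequences. -/
def grigA : List Bool → List Bool
  | [] => []
  | x :: σ => (!x) :: σ

mutual
  /-- The generator `b` of the Grigorchuk group. -/
  def grigB : List Bool → List Bool
    | [] => []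
    | false :: σ => false :: grigA σ
    | true :: σ => true :: grigC σ
  /-- The generator `c` of the Grigorchuk group. -/
  def grigC : List Bool → List Bool
    | [] => []
    | false :: σ => false :: grigA σ
    | true :: σ => true :: grigD σ
  /-- The generator `d` of the Grigorchuk group. -/
  def grigD : List Bool → List Bool
    | [] => []
    | false :: σ => false :: σ
    | true :: σ => true :: grigB σ
end

theorem grigA_involutive : Function.Involutive grigA := by
  intro l
  rcases l with _ | ⟨x, σ⟩
  · rfl
  · cases x <;> rfl

theorem grigBCD_involutive :
    ∀ l : List Bool, grigB (grigB l) = l ∧ grigC (grigC l) = l ∧ grigD (grigD l) = l := by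
  intro l
  induction l with
  | nil => exact ⟨rfl, rfl, rfl⟩
  | cons x σ ih =>
      cases x <;>
        simp [grigB, grigC, grigD, grigA_involutive σ, ih.1, ih.2.1, ih.2.2]

theorem grigB_involutive : Function.Involutive grigB := fun l => (grigBCD_involutive l).1
theorem grigC_involutive : Function.Involutive grigC := fun l => (grigBCD_involutive l).2.1
theorem grigD_involutive : Function.Involutive grigD := fun l => (grigBCD_involutive l).2.2

/-- The generator `a` as a permutation of binary sequences. -/
def aP : Equiv.Perm (List Bool) := grigA_involutive.toPerm
/-- The generator `b` as a permutation of binary sequences. -/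
def bP : Equiv.Perm (List Bool) := grigB_involutive.toPerm
/-- The generator `c` as a permutation of binary sequences. -/
def cP : Equiv.Perm (List Bool) := grigC_involutive.toPerm
/-- The generator `d` as a permutation of binary sequences. -/
def dP : Equiv.Perm (List Bool) := grigD_involutive.toPerm

/-- The Grigorchuk group, as the group of permutations of finite binary sequences
generated by `a`, `b`, `c`, `d`. -/
def Grig : Subgroup (Equiv.Perm (List Bool)) := Subgroup.closure {aP, bP, cP, dP}

/-- `a` as an element of the Grigorchuk group. -/
def ga : Grig := ⟨aP, Subgroup.subset_closure (by simp)⟩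
/-- `b` as an element of the Grigorchuk group. -/
def gb : Grig := ⟨bP, Subgroup.subset_closure (by simp)⟩
/-- `c` as an element of the Grigorchuk group. -/
def gc : Grig := ⟨cP, Subgroup.subset_closure (by simp)⟩
/-- `d` as an element of the Grigorchuk group. -/
def gd : Grig := ⟨dP, Subgroup.subset_closure (by simp)⟩

/-- A permutation of binary sequences preserves the first letter. -/
def FixesFirst (g : Equiv.Perm (List Bool)) : Prop :=
  ∀ (x : Bool) (σ : List Bool), ∃ σ' : List Bool, g (x :: σ) = x :: σ'

/-- The defining property of the subtree-decomposition map `ψ : H → G × G`: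
`h(0σ) = 0·h₀(σ)` and `h(1σ) = 1·h₁(σ)` where `ψ(h) = (h₀, h₁)`. -/
def PsiProp (H : Subgroup Grig) (ψ : H →* Grig × Grig) : Prop :=
  ∀ (h : H) (σ : List Bool),
    ((h : Grig) : Equiv.Perm (List Bool)) (false :: σ) =
        false :: (((ψ h).1 : Grig) : Equiv.Perm (List Bool)) σ ∧
    ((h : Grig) : Equiv.Perm (List Bool)) (true :: σ) =
        true :: (((ψ h).2 : Grig) : Equiv.Perm (List Bool)) σ

/-! Write `⟨p, q⟩` (`ofSubtrees (p, q)`) for the tree automorphism acting as `p` below `false`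
and as `q` below `true`. Since `b = ⟨a, c⟩`, `c = ⟨a, d⟩`, `d = ⟨1, b⟩` and `a⟨p, q⟩a = ⟨q, p⟩`,
every element of `G` is `⟨p, q⟩` or `a⟨p, q⟩` with `p, q ∈ G`; so `H` consists of the
`⟨p, q⟩ ∈ G`, and `ψ⟨p, q⟩ = (p, q)`.

`τ` is written down explicitly. Let `ε₁, ε₂ : G → ℤˣ` (`levelSign`) be the signs of the actions
on the first two levels, and put `τ⟨p, q⟩ = (dad)^[ε₂ p · ε₁ q] · a^[ε₁ p · ε₂ q]` on `H`, where
`x^[-1] = x` and `x^[1] = 1`: a homomorphism into the Klein group `⟨a, dad⟩`. Conjugation by `a`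
swaps `p` and `q`, conjugation by `d` swaps `a` and `dad`, so `τ` extends to `G = H ⊔ aH` by
`τ a = d`. Then `g ↦ ⟨τ g, g⟩` is a homomorphism sending `a, b, c, d` to `aca, d, b, c`, so it
lands in `G`. -/

open Equiv

namespace Subgroup

variable {G K : Type*} [Group G] [Group K] {H : Subgroup G} {a : G} {t : K}

theorem mem_or_mul_mem_of_mem_closure (ha : a * a = 1) (hH : ∀ h ∈ H, a * h * a ∈ H)
    {s : Set G} (hs : ∀ x ∈ s, x ∈ H ∨ a * x ∈ H) {g : G} (hg : g ∈ closure s) :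
    g ∈ H ∨ a * g ∈ H := by
  have ha' (z : G) : a * (a * z) = z := by rw [← mul_assoc, ha, one_mul]
  induction hg using Subgroup.closure_induction with
  | mem x hx => exact hs x hx
  | one => exact .inl H.one_mem
  | mul x y _ _ hx hy =>
    rcases hx with hx | hx <;> rcases hy with hy | hy
    · exact .inl (mul_mem hx hy)
    · exact .inr (by simpa [mul_assoc, ha'] using mul_mem (hH x hx) hy)
    · exact .inr (by simpa [mul_assoc] using mul_mem hx hy)
    · exact .inl (by simpa [mul_assoc, ha'] using mul_mem (hH _ hx) hy)
  | inv x _ hx =>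
    rcases hx with hx | hx
    · exact .inl (inv_mem hx)
    · exact .inr (by simpa [mul_assoc, ha, inv_eq_of_mul_eq_one_right ha] using hH _ (inv_mem hx))

theorem conj_mem_of_mem_or_mul_mem (ha : a * a = 1) (haH : a ∉ H)
    (hcov : ∀ g, g ∈ H ∨ a * g ∈ H) {h : G} (hh : h ∈ H) : a * h * a ∈ H := by
  refine (hcov _).resolve_right fun h' => haH ?_
  simpa [mul_assoc, ← mul_assoc a a, ha] using mul_mem (inv_mem hh) h'

noncomputable def extendByOne (f : H →* K) : G → K := Function.extend ((↑) : H → G) f 1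

theorem extendByOne_coe (f : H →* K) (h : H) : extendByOne f h = f h :=
  Subtype.val_injective.extend_apply _ _ h

theorem extendByOne_one (f : H →* K) : extendByOne f 1 = 1 := by
  simpa using extendByOne_coe f 1

theorem extendByOne_mul (f : H →* K) {x y : G} (hx : x ∈ H) (hy : y ∈ H) :
    extendByOne f (x * y) = extendByOne f x * extendByOne f y := by
  have := extendByOne_coe f (⟨x, hx⟩ * ⟨y, hy⟩)
  rwa [map_mul, ← extendByOne_coe, ← extendByOne_coe] at this

open Classical in
noncomputable def extendByInvolutionFun (a : G) (f : H →* K) (t : K) (g : G) : K :=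
  if g ∈ H then extendByOne f g else t * extendByOne f (a * g)

variable (ha : a * a = 1) (haH : a ∉ H) (hcov : ∀ g, g ∈ H ∨ a * g ∈ H) (f : H →* K)
  (ht : t * t = 1) (hf : ∀ h₁ h₂ : H, (h₂ : G) = a * h₁ * a → f h₂ = t * f h₁ * t)
include ha haH hcov ht hf

theorem extendByInvolutionFun_mul_of_mem {x : G} (hx : x ∈ H) (y : G) :
    extendByInvolutionFun a f t (x * y) =
      extendByInvolutionFun a f t x * extendByInvolutionFun a f t y := by
  have hxa := conj_mem_of_mem_or_mul_mem ha haH hcov hx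
  by_cases hy : y ∈ H
  · simp only [extendByInvolutionFun, if_pos hx, if_pos hy, if_pos (mul_mem hx hy),
      extendByOne_mul f hx hy]
  have hay := (hcov y).resolve_left hy
  have hxy : x * y ∉ H := fun h => hy (by simpa using mul_mem (inv_mem hx) h)
  have hconj : extendByOne f (a * x * a) = t * extendByOne f x * t := by
    have := hf ⟨x, hx⟩ ⟨_, hxa⟩ rfl
    rwa [← extendByOne_coe, ← extendByOne_coe] at this
  simp only [extendByInvolutionFun, if_pos hx, if_neg hy, if_neg hxy]
  rw [show a * (x * y) = a * x * a * (a * y) by simp [mul_assoc, ← mul_assoc a a, ha],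
    extendByOne_mul f hxa hay, hconj]
  simp [mul_assoc, ← mul_assoc t t, ht]

omit hf in
theorem extendByInvolutionFun_mul_self_mul (y : G) :
    extendByInvolutionFun a f t (a * y) = t * extendByInvolutionFun a f t y := by
  by_cases hy : y ∈ H
  · have hay : a * y ∉ H := fun h => haH (by simpa using mul_mem h (inv_mem hy))
    simp [extendByInvolutionFun, hy, hay, ← mul_assoc, ha]
  · simp only [extendByInvolutionFun, if_neg hy, if_pos ((hcov y).resolve_left hy), ← mul_assoc,
      ht, one_mul]

noncomputable def extendByInvolution : G →* K where
  toFun := extendByInvolutionFun a f t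
  map_one' := by simp [extendByInvolutionFun, extendByOne_one]
  map_mul' g k := by
    by_cases hg : g ∈ H
    · exact extendByInvolutionFun_mul_of_mem ha haH hcov f ht hf hg k
    have hag := (hcov g).resolve_left hg
    have ha' (z : G) : a * (a * z) = z := by rw [← mul_assoc, ha, one_mul]
    calc extendByInvolutionFun a f t (g * k)
        = t * extendByInvolutionFun a f t (a * g * k) := by
          rw [← extendByInvolutionFun_mul_self_mul ha haH hcov f ht, mul_assoc, ha']
      _ = extendByInvolutionFun a f t g * extendByInvolutionFun a f t k := by
          rw [extendByInvolutionFun_mul_of_mem ha haH hcov f ht hf hag, ← mul_assoc,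
            ← extendByInvolutionFun_mul_self_mul ha haH hcov f ht, ha']

theorem extendByInvolution_apply_coe (h : H) :
    extendByInvolution ha haH hcov f ht hf h = f h := by
  simp [extendByInvolution, extendByInvolutionFun, extendByOne_coe]

theorem extendByInvolution_apply_self : extendByInvolution ha haH hcov f ht hf a = t := by
  simp [extendByInvolution, extendByInvolutionFun, haH, ha, extendByOne_one]

end Subgroup

section UnitsInt

variable {M : Type*} [Monoid M]

def unitsIntHom (x : M) (hx : x * x = 1) : ℤˣ →* M where
  toFun u := if u = 1 then 1 else x
  map_one' := if_pos rfl
  map_mul' u v := by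
    rcases Int.units_eq_one_or u with rfl | rfl <;> rcases Int.units_eq_one_or v with rfl | rfl <;>
      simp [hx]

theorem Commute.unitsIntHom {x y : M} (h : Commute x y) (hx : x * x = 1) (hy : y * y = 1)
    (u v : ℤˣ) : Commute (unitsIntHom x hx u) (unitsIntHom y hy v) := by
  rcases Int.units_eq_one_or u with rfl | rfl <;> rcases Int.units_eq_one_or v with rfl | rfl <;>
    simp [_root_.unitsIntHom, h]

end UnitsInt

namespace Grigorchuk

def ofSubtrees : Perm (List Bool) × Perm (List Bool) →* Perm (List Bool) where
  toFun pq :=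
    { toFun := fun | [] => [] | x :: w => x :: cond x pq.2 pq.1 w
      invFun := fun | [] => [] | x :: w => x :: cond x pq.2⁻¹ pq.1⁻¹ w
      left_inv := by rintro (_ | ⟨_ | _, w⟩) <;> simp
      right_inv := by rintro (_ | ⟨_ | _, w⟩) <;> simp }
  map_one' := by ext (_ | ⟨_ | _, w⟩) <;> rfl
  map_mul' _ _ := by ext (_ | ⟨_ | _, w⟩) <;> rfl

@[simp] theorem ofSubtrees_apply_cons (pq : Perm (List Bool) × Perm (List Bool)) (x : Bool)
    (w : List Bool) : ofSubtrees pq (x :: w) = x :: cond x pq.2 pq.1 w :=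
  rfl

theorem ofSubtrees_injective : Function.Injective ofSubtrees := by
  intro pq pq' h
  have key (x : Bool) (w : List Bool) := congrArg List.tail (DFunLike.congr_fun h (x :: w))
  exact Prod.ext (Equiv.ext (key false)) (Equiv.ext (key true))

theorem fixesFirst_ofSubtrees (pq : Perm (List Bool) × Perm (List Bool)) :
    FixesFirst (ofSubtrees pq) :=
  fun _ _ => ⟨_, rfl⟩

theorem not_fixesFirst_aP_mul_ofSubtrees (pq : Perm (List Bool) × Perm (List Bool)) :
    ¬ FixesFirst (aP * ofSubtrees pq) := by
  intro h
  obtain ⟨w, hw⟩ := h false []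
  simp [aP, grigA] at hw

theorem aP_mul_ofSubtrees_mul_aP (pq : Perm (List Bool) × Perm (List Bool)) :
    aP * ofSubtrees pq * aP = ofSubtrees pq.swap := by
  ext (_ | ⟨_ | _, w⟩) <;> rfl

theorem bP_eq_ofSubtrees : bP = ofSubtrees (aP, cP) := by ext (_ | ⟨_ | _, w⟩) <;> rfl
theorem cP_eq_ofSubtrees : cP = ofSubtrees (aP, dP) := by ext (_ | ⟨_ | _, w⟩) <;> rfl
theorem dP_eq_ofSubtrees : dP = ofSubtrees (1, bP) := by ext (_ | ⟨_ | _, w⟩) <;> rfl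

theorem aP_mul_aP : aP * aP = 1 := Equiv.ext grigA_involutive
theorem ga_mul_ga : ga * ga = 1 := Subtype.ext aP_mul_aP
theorem gd_mul_gd : gd * gd = 1 := Subtype.ext (Equiv.ext grigD_involutive)

theorem commute_gd_ga_gd_ga : Commute (gd * ga * gd) ga :=
  Subtype.ext (Equiv.ext (by rintro (_ | ⟨_ | _, w⟩) <;> rfl))

theorem closure_generators_eq_top : Subgroup.closure ({ga, gb, gc, gd} : Set Grig) = ⊤ := by
  refine eq_top_iff.2 (le_of_eq_of_le
    (Subgroup.closure_closure_coe_preimage (k := {aP, bP, cP, dP})).symm (Subgroup.closure_mono ?_))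
  rintro ⟨g, hg⟩ (rfl | rfl | rfl | rfl : g = aP ∨ g = bP ∨ g = cP ∨ g = dP)
  exacts [.inl rfl, .inr (.inl rfl), .inr (.inr (.inl rfl)), .inr (.inr (.inr rfl))]

def subtreePairs : Subgroup (Perm (List Bool)) := (Grig.prod Grig).map ofSubtrees

theorem bP_mem_subtreePairs : bP ∈ subtreePairs := ⟨_, ⟨ga.2, gc.2⟩, bP_eq_ofSubtrees.symm⟩
theorem cP_mem_subtreePairs : cP ∈ subtreePairs := ⟨_, ⟨ga.2, gd.2⟩, cP_eq_ofSubtrees.symm⟩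
theorem dP_mem_subtreePairs : dP ∈ subtreePairs := ⟨_, ⟨one_mem _, gb.2⟩, dP_eq_ofSubtrees.symm⟩

theorem mem_subtreePairs_or_aP_mul_mem {g : Perm (List Bool)} (hg : g ∈ Grig) :
    g ∈ subtreePairs ∨ aP * g ∈ subtreePairs := by
  refine Subgroup.mem_or_mul_mem_of_mem_closure aP_mul_aP ?_ ?_ hg
  · rintro _ ⟨pq, hpq, rfl⟩
    exact ⟨pq.swap, ⟨hpq.2, hpq.1⟩, (aP_mul_ofSubtrees_mul_aP pq).symm⟩
  · rintro x (rfl | rfl | rfl | rfl)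
    exacts [.inr ⟨1, one_mem _, by rw [map_one, aP_mul_aP]⟩, .inl bP_mem_subtreePairs,
      .inl cP_mem_subtreePairs, .inl dP_mem_subtreePairs]

def firstLevelStab : Subgroup Grig := subtreePairs.comap Grig.subtype

theorem mem_firstLevelStab_iff (g : Grig) :
    g ∈ firstLevelStab ↔ FixesFirst (g : Perm (List Bool)) := by
  refine ⟨fun ⟨pq, _, hpq⟩ => (show ofSubtrees pq = g from hpq) ▸ fixesFirst_ofSubtrees pq,
    fun h => (mem_subtreePairs_or_aP_mul_mem g.2).resolve_right fun ⟨pq, _, hpq⟩ => ?_⟩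
  refine not_fixesFirst_aP_mul_ofSubtrees pq ?_
  rwa [show ofSubtrees pq = aP * g from hpq, ← mul_assoc, aP_mul_aP, one_mul]

theorem ga_not_mem_firstLevelStab : ga ∉ firstLevelStab := fun h => by
  refine not_fixesFirst_aP_mul_ofSubtrees 1 ?_
  rw [map_one, mul_one]
  exact (mem_firstLevelStab_iff ga).1 h

noncomputable def psi : firstLevelStab →* Grig × Grig :=
  (Subgroup.prodEquiv Grig Grig).toMonoidHom.comp <|
    (Subgroup.equivMapOfInjective _ _ ofSubtrees_injective).symm.toMonoidHom.comp <|
      (Grig.subtype.comp firstLevelStab.subtype).codRestrict subtreePairs fun h => h.2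

theorem ofSubtrees_psi (h : firstLevelStab) : ofSubtrees ((psi h).1, (psi h).2) = h :=
  congrArg Subtype.val
    ((Subgroup.equivMapOfInjective _ _ ofSubtrees_injective).apply_symm_apply ⟨h, h.2⟩)

theorem psi_eq_iff {h : firstLevelStab} {pq : Grig × Grig} :
    psi h = pq ↔ ofSubtrees (pq.1, pq.2) = h := by
  rw [← ofSubtrees_psi h, ofSubtrees_injective.eq_iff, eq_comm, Prod.ext_iff, Prod.ext_iff]
  simp only [Subtype.ext_iff]

theorem psiProp_psi : PsiProp firstLevelStab psi := fun h _ => by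
  rw [← ofSubtrees_psi h]
  exact ⟨rfl, rfl⟩

theorem psi_conj {h₁ h₂ : firstLevelStab} (h : (h₂ : Grig) = ga * h₁ * ga) :
    psi h₂ = (psi h₁).swap := by
  rw [psi_eq_iff, h]
  change _ = aP * ((h₁ : Grig) : Perm (List Bool)) * aP
  rw [← ofSubtrees_psi h₁, aP_mul_ofSubtrees_mul_aP]
  rfl

def lengthPreserving : Subgroup (Perm (List Bool)) where
  carrier := {f | ∀ l, (f l).length = l.length}
  mul_mem' hf hg l := (hf _).trans (hg l)
  one_mem' _ := rfl
  inv_mem' {f} hf l := by simpa using (hf (f⁻¹ l)).symm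

theorem grigA_length (l : List Bool) : (grigA l).length = l.length := by cases l <;> rfl

theorem grigBCD_length (l : List Bool) :
    (grigB l).length = l.length ∧ (grigC l).length = l.length ∧ (grigD l).length = l.length := by
  induction l with
  | nil => exact ⟨rfl, rfl, rfl⟩
  | cons x w ih => cases x <;> simp [grigB, grigC, grigD, grigA_length, ih.1, ih.2.1, ih.2.2]

theorem Grig_le_lengthPreserving : Grig ≤ lengthPreserving := by
  rw [Grig, Subgroup.closure_le]
  rintro _ (rfl | rfl | rfl | rfl)
  exacts [grigA_length, fun l => (grigBCD_length l).1, fun l => (grigBCD_length l).2.1,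
    fun l => (grigBCD_length l).2.2]

def levelPerm (n : ℕ) : lengthPreserving →* Perm (List.Vector Bool n) where
  toFun f := (f : Perm (List Bool)).subtypePerm fun l => by rw [f.2 l]
  map_one' := rfl
  map_mul' _ _ := rfl

def levelSign (n : ℕ) : Grig →* ℤˣ :=
  Perm.sign.comp ((levelPerm n).comp (Subgroup.inclusion Grig_le_lengthPreserving))

@[simp] theorem levelSign_one_ga : levelSign 1 ga = -1 := by decide
@[simp] theorem levelSign_one_gb : levelSign 1 gb = 1 := by decide
@[simp] theorem levelSign_one_gc : levelSign 1 gc = 1 := by decide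
@[simp] theorem levelSign_one_gd : levelSign 1 gd = 1 := by decide
@[simp] theorem levelSign_two_ga : levelSign 2 ga = 1 := by decide
@[simp] theorem levelSign_two_gb : levelSign 2 gb = -1 := by decide
@[simp] theorem levelSign_two_gc : levelSign 2 gc = -1 := by decide
@[simp] theorem levelSign_two_gd : levelSign 2 gd = 1 := by decide

def sectionSigns : Grig × Grig →* ℤˣ × ℤˣ :=
  ((levelSign 2).comp (MonoidHom.fst _ _) * (levelSign 1).comp (MonoidHom.snd _ _)).prod
    ((levelSign 1).comp (MonoidHom.fst _ _) * (levelSign 2).comp (MonoidHom.snd _ _))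

theorem sectionSigns_swap (pq : Grig × Grig) : sectionSigns pq.swap = (sectionSigns pq).swap := by
  simp [sectionSigns, mul_comm]

theorem gd_mul_ga_mul_gd_mul_self : gd * ga * gd * (gd * ga * gd) = 1 := by
  simp [mul_assoc, ← mul_assoc gd gd, gd_mul_gd, ← mul_assoc ga ga, ga_mul_ga]

noncomputable def kleinHom : ℤˣ × ℤˣ →* Grig :=
  (unitsIntHom (gd * ga * gd) gd_mul_ga_mul_gd_mul_self).noncommCoprod (unitsIntHom ga ga_mul_ga)
    (commute_gd_ga_gd_ga.unitsIntHom _ _)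

theorem kleinHom_swap (st : ℤˣ × ℤˣ) : kleinHom st.swap = gd * kleinHom st * gd := by
  have hd (z : Grig) : gd * (gd * z) = z := by rw [← mul_assoc, gd_mul_gd, one_mul]
  obtain ⟨s, t⟩ := st
  rcases Int.units_eq_one_or s with rfl | rfl <;> rcases Int.units_eq_one_or t with rfl | rfl <;>
    simp [kleinHom, unitsIntHom, mul_assoc, hd, gd_mul_gd]
  simpa [mul_assoc] using commute_gd_ga_gd_ga.eq

noncomputable def tau : Grig →* Grig :=
  Subgroup.extendByInvolution ga_mul_ga ga_not_mem_firstLevelStab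
    (fun g => mem_subtreePairs_or_aP_mul_mem g.2)
    (kleinHom.comp (sectionSigns.comp psi)) gd_mul_gd
    fun _ _ h => by simp [psi_conj h, sectionSigns_swap, kleinHom_swap]

theorem tau_ga : tau ga = gd := Subgroup.extendByInvolution_apply_self ..

theorem tau_apply_coe (h : firstLevelStab) : tau h = kleinHom (sectionSigns (psi h)) :=
  Subgroup.extendByInvolution_apply_coe ..

theorem psi_gb : psi ⟨gb, bP_mem_subtreePairs⟩ = (ga, gc) := psi_eq_iff.2 bP_eq_ofSubtrees.symm
theorem psi_gc : psi ⟨gc, cP_mem_subtreePairs⟩ = (ga, gd) := psi_eq_iff.2 cP_eq_ofSubtrees.symm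
theorem psi_gd : psi ⟨gd, dP_mem_subtreePairs⟩ = (1, gb) := psi_eq_iff.2 dP_eq_ofSubtrees.symm

theorem tau_gb : tau gb = 1 := by
  rw [tau_apply_coe ⟨gb, bP_mem_subtreePairs⟩, psi_gb]
  simp [sectionSigns, kleinHom]

theorem tau_gc : tau gc = ga := by
  rw [tau_apply_coe ⟨gc, cP_mem_subtreePairs⟩, psi_gc]
  simp [sectionSigns, kleinHom, unitsIntHom]

theorem tau_gd : tau gd = ga := by
  rw [tau_apply_coe ⟨gd, dP_mem_subtreePairs⟩, psi_gd]
  simp [sectionSigns, kleinHom, unitsIntHom]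

noncomputable def sigmaPerm : Grig →* Perm (List Bool) :=
  ofSubtrees.comp ((Grig.subtype.comp tau).prod Grig.subtype)

theorem sigmaPerm_apply (g : Grig) : sigmaPerm g = ofSubtrees (tau g, g) := rfl

theorem sigmaPerm_ga : sigmaPerm ga = ↑(ga * gc * ga) := by
  rw [sigmaPerm_apply, tau_ga]
  exact (aP_mul_ofSubtrees_mul_aP (aP, dP)).symm.trans (by rw [← cP_eq_ofSubtrees]; rfl)

theorem sigmaPerm_gb : sigmaPerm gb = gd := by
  rw [sigmaPerm_apply, tau_gb]; exact dP_eq_ofSubtrees.symm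

theorem sigmaPerm_gc : sigmaPerm gc = gb := by
  rw [sigmaPerm_apply, tau_gc]; exact bP_eq_ofSubtrees.symm

theorem sigmaPerm_gd : sigmaPerm gd = gc := by
  rw [sigmaPerm_apply, tau_gd]; exact cP_eq_ofSubtrees.symm

theorem sigmaPerm_mem (g : Grig) : sigmaPerm g ∈ Grig := by
  suffices sigmaPerm.range ≤ Grig from this ⟨g, rfl⟩
  rw [MonoidHom.range_eq_map, ← closure_generators_eq_top, MonoidHom.map_closure,
    Subgroup.closure_le]
  rintro _ ⟨g, (rfl | rfl | rfl | rfl), rfl⟩ <;>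
    simp only [SetLike.mem_coe, sigmaPerm_ga, sigmaPerm_gb, sigmaPerm_gc, sigmaPerm_gd,
      SetLike.coe_mem]

noncomputable def sigma : Grig →* Grig := sigmaPerm.codRestrict Grig sigmaPerm_mem

theorem sigma_ga : sigma ga = ga * gc * ga := Subtype.ext sigmaPerm_ga
theorem sigma_gb : sigma gb = gd := Subtype.ext sigmaPerm_gb
theorem sigma_gc : sigma gc = gb := Subtype.ext sigmaPerm_gc
theorem sigma_gd : sigma gd = gc := Subtype.ext sigmaPerm_gd

theorem sigma_mem_firstLevelStab (g : Grig) : sigma g ∈ firstLevelStab :=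
  ⟨(tau g, g), ⟨(tau g).2, g.2⟩, rfl⟩

theorem psi_sigma (g : Grig) : psi ⟨sigma g, sigma_mem_firstLevelStab g⟩ = (tau g, g) :=
  psi_eq_iff.2 rfl

end Grigorchuk

/-- The maps `σ` (with `σ(a) = aca`, `σ(b) = d`, `σ(c) = b`, `σ(d) = c`) and `τ` (with
`τ(a) = d`, `τ(b) = 1`, `τ(c) = a`, `τ(d) = a`) extend to homomorphisms `G → G` of the
Grigorchuk group; the image of `σ` lies in the first-level stabilizer `H`, and
`ψ(σ(g)) = (τ(g), g)` for all `g ∈ G`. -/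
theorem grigorchuk_sigma_tau :
    ∃ H : Subgroup Grig,
      (∀ g : Grig, g ∈ H ↔ FixesFirst (g : Equiv.Perm (List Bool))) ∧
      ∃ ψ : H →* Grig × Grig, PsiProp H ψ ∧
      ∃ σ τ : Grig →* Grig,
        σ ga = ga * gc * ga ∧ σ gb = gd ∧ σ gc = gb ∧ σ gd = gc ∧
        τ ga = gd ∧ τ gb = 1 ∧ τ gc = ga ∧ τ gd = ga ∧
        ∃ hσ : ∀ g : Grig, σ g ∈ H,
          ∀ g : Grig, ψ ⟨σ g, hσ g⟩ = (τ g, g) := by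
  refine ⟨Grigorchuk.firstLevelStab, Grigorchuk.mem_firstLevelStab_iff, Grigorchuk.psi,
    Grigorchuk.psiProp_psi, Grigorchuk.sigma, Grigorchuk.tau, Grigorchuk.sigma_ga,
    Grigorchuk.sigma_gb, Grigorchuk.sigma_gc, Grigorchuk.sigma_gd, Grigorchuk.tau_ga,
    Grigorchuk.tau_gb, Grigorchuk.tau_gc, Grigorchuk.tau_gd, Grigorchuk.sigma_mem_firstLevelStab,
    Grigorchuk.psi_sigma⟩
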